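/- arXiv:1907.10316 — 2 statements merged into one kernel-verified Lean document; each statement's English description precedes it below -/
import Mathlib

section
/- For the Rössler system with parameters a, b, c ∈ ℝ, consider the observability map Φ_z = (z, L_f z, L_f² z) : ℝ³ → ℝ³ obtained by measuring the variable z. Then for every point (x, y, z) ∈ ℝ³, the observability determinant det DΦ_z(x, y, z) equals −z²; in particular the Jacobian of Φ_z is singular exactly on the plane z = 0. -/
/-- The `k`-th Lie derivative of a scalar function `h` along a vector field `F`. -/
noncomputable def lieD {E : Type*} [NormedAddCommGroup E] [NormedSpace ℝ E]
    (F : E → E) (k : ℕ) (h : E → ℝ) : E → ℝ :=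
  match k with
  | 0 => h
  | k + 1 => fun p => fderiv ℝ (lieD F k h) p (F p)

/-- The observability determinant of a map `Φ` at a point `p`:
the determinant of the Jacobian (Fréchet derivative) of `Φ` at `p`. -/
noncomputable def obsDet {E : Type*} [NormedAddCommGroup E] [NormedSpace ℝ E]
    (Φ : E → E) (p : E) : ℝ :=
  LinearMap.det ((fderiv ℝ Φ p).toLinearMap)

/-- The Rössler vector field with parameters `a b c`, coordinates `(x, y, z)`. -/
def rossler (a b c : ℝ) (p : Fin 3 → ℝ) : Fin 3 → ℝ :=
  ![-p 1 - p 2, p 0 + a * p 1, b + p 2 * (p 0 - c)]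

/-- Observability map obtained by measuring the variable `z` of the Rössler system:
`Φ_z = (z, L_f z, L_f² z)`. -/
noncomputable def PhiZ (a b c : ℝ) (q : Fin 3 → ℝ) : Fin 3 → ℝ :=
  ![lieD (rossler a b c) 0 (fun r => r 2) q,
    lieD (rossler a b c) 1 (fun r => r 2) q,
    lieD (rossler a b c) 2 (fun r => r 2) q]

-- auxiliary

notation "pr" i => (ContinuousLinearMap.proj i : (Fin 3 → ℝ) →L[ℝ] ℝ)

lemma lie1 (a b c : ℝ) (q : Fin 3 → ℝ) :
    lieD (rossler a b c) 1 (fun r => r 2) q = b + q 2 * (q 0 - c) := by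
  show fderiv ℝ (fun r : Fin 3 → ℝ => r 2) q (rossler a b c q) = _
  have h : fderiv ℝ (fun r : Fin 3 → ℝ => r 2) q = (pr (2:Fin 3)) :=
    (hasFDerivAt_apply (2:Fin 3) q).fderiv
  rw [h]
  simp [rossler]

-- derivative of g := fun q => b + q 2 * (q 0 - c)
lemma hg (c : ℝ) (b : ℝ) (q : Fin 3 → ℝ) :
    HasFDerivAt (fun q : Fin 3 → ℝ => b + q 2 * (q 0 - c))
      (q 2 • (pr (0:Fin 3)) + (q 0 - c) • (pr (2:Fin 3))) q := by
  have h2 : HasFDerivAt (fun q : Fin 3 → ℝ => q 2) (pr (2:Fin 3)) q :=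
    hasFDerivAt_apply 2 q
  have h0 : HasFDerivAt (fun q : Fin 3 → ℝ => q 0 - c) (pr (0:Fin 3)) q := by
    simpa using (hasFDerivAt_apply (0:Fin 3) q).sub_const c
  simpa using (h2.mul h0).const_add b

lemma lie2 (a b c : ℝ) (q : Fin 3 → ℝ) :
    lieD (rossler a b c) 2 (fun r => r 2) q
      = (b + q 2 * (q 0 - c)) * (q 0 - c) + q 2 * (-q 1 - q 2) := by
  have hfun : lieD (rossler a b c) 1 (fun r => r 2) = fun q => b + q 2 * (q 0 - c) :=
    funext (lie1 a b c)
  show fderiv ℝ (lieD (rossler a b c) 1 fun r => r 2) q (rossler a b c q) = _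
  rw [hfun, (hg c b q).fderiv]
  simp [rossler]
  ring


lemma phiZ_eq (a b c : ℝ) :
    PhiZ a b c = fun q => ![q 2, b + q 2 * (q 0 - c),
      (b + q 2 * (q 0 - c)) * (q 0 - c) + q 2 * (-q 1 - q 2)] := by
  funext q i
  fin_cases i
  · rfl
  · simpa [PhiZ] using lie1 a b c q
  · simpa [PhiZ] using lie2 a b c q

noncomputable def LL (b c : ℝ) (p : Fin 3 → ℝ) : (Fin 3 → ℝ) →L[ℝ] (Fin 3 → ℝ) :=
  ContinuousLinearMap.pi
    ![(pr (2:Fin 3)),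
      p 2 • (pr (0:Fin 3)) + (p 0 - c) • (pr (2:Fin 3)),
      ((b + p 2 * (p 0 - c)) • (pr (0:Fin 3))
          + (p 0 - c) • (p 2 • (pr (0:Fin 3)) + (p 0 - c) • (pr (2:Fin 3))))
        + (p 2 • (-(pr (1:Fin 3)) - (pr (2:Fin 3))) + (-p 1 - p 2) • (pr (2:Fin 3)))]

lemma hasFDeriv_phi (a b c : ℝ) (p : Fin 3 → ℝ) :
    HasFDerivAt (PhiZ a b c) (LL b c p) p := by
  rw [phiZ_eq]
  have key : HasFDerivAt (fun q (i : Fin 3) =>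
      (![q 2, b + q 2 * (q 0 - c),
        (b + q 2 * (q 0 - c)) * (q 0 - c) + q 2 * (-q 1 - q 2)] : Fin 3 → ℝ) i)
      (LL b c p) p := by
    apply hasFDerivAt_pi.2
    intro i
    have h0 : HasFDerivAt (fun q : Fin 3 → ℝ => q 0 - c) (pr (0:Fin 3)) p := by
      simpa using (hasFDerivAt_apply (0:Fin 3) p).sub_const c
    have hneg : HasFDerivAt (fun q : Fin 3 → ℝ => -q 1 - q 2)
        (-(pr (1:Fin 3)) - (pr (2:Fin 3))) p :=
      (hasFDerivAt_apply (1:Fin 3) p).neg.sub (hasFDerivAt_apply (2:Fin 3) p)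
    fin_cases i
    · simpa [LL] using hasFDerivAt_apply (2:Fin 3) p
    · simpa [LL] using hg c b p
    · simpa [LL, Pi.mul_def, Pi.add_def] using ((hg c b p).mul h0).add ((hasFDerivAt_apply (2:Fin 3) p).mul hneg)
  exact key


/-- The observability determinant of the Rössler system measured via `z` equals `-z²`;
in particular the Jacobian of `Φ_z` is singular exactly on the plane `z = 0`. -/
theorem rossler_obsDet_z (a b c : ℝ) (p : Fin 3 → ℝ) :
    obsDet (PhiZ a b c) p = -(p 2) ^ 2 ∧
    (obsDet (PhiZ a b c) p = 0 ↔ p 2 = 0) := by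
  have hdet : obsDet (PhiZ a b c) p = -(p 2) ^ 2 := by
    rw [obsDet, (hasFDeriv_phi a b c p).fderiv, ← LinearMap.det_toMatrix',
      Matrix.det_fin_three]
    simp only [LinearMap.toMatrix'_apply, ContinuousLinearMap.coe_coe, LL,
      ContinuousLinearMap.pi_apply, Matrix.cons_val_zero, Matrix.cons_val_one,
      Matrix.head_cons, Matrix.cons_val_two, Matrix.tail_cons,
      ContinuousLinearMap.add_apply, ContinuousLinearMap.smul_apply,
      ContinuousLinearMap.sub_apply, ContinuousLinearMap.neg_apply,
      ContinuousLinearMap.proj_apply, smul_eq_mul]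
    simp only [Pi.single_apply, Fin.isValue, Fin.reduceEq, if_true, if_false, reduceIte]
    ring
  refine ⟨hdet, ?_⟩
  rw [hdet]
  constructor
  · intro h; nlinarith [sq_nonneg (p 2)]
  · intro h; rw [h]; ring
end

section
/- For the dyad of Rössler systems coupled via the variable z with coupling strength ρ, let Φ : ℝ⁶ → ℝ⁶ be the observability map Φ = (x₁, L_F x₁, y₂, L_F y₂, L_F² y₂, L_F³ y₂), obtained by measuring x at node 1 and y at node 2. Then the observability determinant det DΦ(p) equals −ρ at every point p ∈ ℝ⁶. -/
/-- Dyad of Rössler systems coupled via the variable `z` with coupling strength `ρ`;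
coordinates `(x₁, y₁, z₁, x₂, y₂, z₂)`. -/
def dyadZ (a b c ρ : ℝ) (p : Fin 6 → ℝ) : Fin 6 → ℝ :=
  ![-p 1 - p 2,
    p 0 + a * p 1,
    b + p 2 * (p 0 - c) + ρ * (p 5 - p 2),
    -p 4 - p 5,
    p 3 + a * p 4,
    b + p 5 * (p 3 - c) + ρ * (p 2 - p 5)]

/-- Observability map measuring `x` at node 1 and `y` at node 2:
`Φ = (x₁, L_F x₁, y₂, L_F y₂, L_F² y₂, L_F³ y₂)`. -/
noncomputable def PhiX2Y4c (F : (Fin 6 → ℝ) → (Fin 6 → ℝ)) (q : Fin 6 → ℝ) : Fin 6 → ℝ :=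
  ![lieD F 0 (fun r => r 0) q,
    lieD F 1 (fun r => r 0) q,
    lieD F 0 (fun r => r 4) q,
    lieD F 1 (fun r => r 4) q,
    lieD F 2 (fun r => r 4) q,
    lieD F 3 (fun r => r 4) q]

open ContinuousLinearMap

notation "π" i => (proj i : (Fin 6 → ℝ) →L[ℝ] ℝ)

lemma lieD1x (a b c ρ : ℝ) :
    lieD (dyadZ a b c ρ) 1 (fun r => r 0) = fun q => -q 1 - q 2 := by
  funext q
  have h : HasFDerivAt (fun r : Fin 6 → ℝ => r 0) (π 0) q := (π 0).hasFDerivAt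
  simp [lieD, h.fderiv, dyadZ]

lemma lieD1y (a b c ρ : ℝ) :
    lieD (dyadZ a b c ρ) 1 (fun r => r 4) = fun q => q 3 + a * q 4 := by
  funext q
  have h : HasFDerivAt (fun r : Fin 6 → ℝ => r 4) (π 4) q := (π 4).hasFDerivAt
  simp [lieD, h.fderiv, dyadZ]

lemma lieD2y (a b c ρ : ℝ) :
    lieD (dyadZ a b c ρ) 2 (fun r => r 4)
      = fun q => (-q 4 - q 5) + a * (q 3 + a * q 4) := by
  funext q
  show fderiv ℝ (lieD (dyadZ a b c ρ) 1 (fun r => r 4)) q (dyadZ a b c ρ q) = _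
  rw [lieD1y]
  have h : HasFDerivAt (fun q : Fin 6 → ℝ => q 3 + a * q 4)
      ((π 3) + a • (π 4)) q :=
    (π 3).hasFDerivAt.add ((π 4).hasFDerivAt.const_mul a)
  rw [h.fderiv]
  simp [dyadZ]

lemma lieD3y (a b c ρ : ℝ) :
    lieD (dyadZ a b c ρ) 3 (fun r => r 4)
      = fun q => (-(q 3 + a * q 4) - (b + q 5 * (q 3 - c) + ρ * (q 2 - q 5)))
          + a * ((-q 4 - q 5) + a * (q 3 + a * q 4)) := by
  funext q
  show fderiv ℝ (lieD (dyadZ a b c ρ) 2 (fun r => r 4)) q (dyadZ a b c ρ q) = _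
  rw [lieD2y]
  have h : HasFDerivAt (fun q : Fin 6 → ℝ => (-q 4 - q 5) + a * (q 3 + a * q 4))
      ((-(π 4) - (π 5)) + a • ((π 3) + a • (π 4))) q :=
    ((π 4).hasFDerivAt.neg.sub (π 5).hasFDerivAt).add
      (((π 3).hasFDerivAt.add ((π 4).hasFDerivAt.const_mul a)).const_mul a)
  rw [h.fderiv]
  have h3 : dyadZ a b c ρ q 3 = -q 4 - q 5 := rfl
  have h4 : dyadZ a b c ρ q 4 = q 3 + a * q 4 := rfl
  have h5 : dyadZ a b c ρ q 5 = b + q 5 * (q 3 - c) + ρ * (q 2 - q 5) := rfl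
  simp only [ContinuousLinearMap.add_apply, ContinuousLinearMap.sub_apply,
    ContinuousLinearMap.neg_apply, ContinuousLinearMap.smul_apply,
    ContinuousLinearMap.proj_apply, smul_eq_mul, h3, h4, h5]

lemma cons_val_five {α : Type*} (x : α) (u : Fin 5 → α) : Matrix.vecCons x u 5 = u 4 := rfl

noncomputable def Dmat (a c ρ : ℝ) (p : Fin 6 → ℝ) : Fin 6 → ((Fin 6 → ℝ) →L[ℝ] ℝ) :=
    ![π 0,
      -(π 1) - (π 2),
      π 4,
      (π 3) + a • (π 4),
      (-(π 4) - (π 5)) + a • ((π 3) + a • (π 4)),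
      (-((π 3) + a • (π 4)) - ((p 5 • (π 3) + (p 3 - c) • (π 5)) + ρ • ((π 2) - (π 5))))
        + a • ((-(π 4) - (π 5)) + a • ((π 3) + a • (π 4)))]

set_option maxHeartbeats 1000000 in
set_option maxRecDepth 4000 in
/-- For the `z`-coupled dyad of Rössler systems, the observability determinant of
`Φ = (x₁, L_F x₁, y₂, L_F y₂, L_F² y₂, L_F³ y₂)` equals `-ρ` everywhere. -/
theorem dyadZ_obsDet_x1y2 (a b c ρ : ℝ) (p : Fin 6 → ℝ) :
    obsDet (PhiX2Y4c (dyadZ a b c ρ)) p = -ρ := by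
  have h0 : HasFDerivAt (fun x : Fin 6 → ℝ => x 0) (π 0) p := (π 0).hasFDerivAt
  have h1 : HasFDerivAt (lieD (dyadZ a b c ρ) 1 (fun r => r 0)) (-(π 1) - (π 2)) p := by
    rw [lieD1x]
    exact (π 1).hasFDerivAt.neg.sub (π 2).hasFDerivAt
  have h2 : HasFDerivAt (fun x : Fin 6 → ℝ => x 4) (π 4) p := (π 4).hasFDerivAt
  have h3 : HasFDerivAt (lieD (dyadZ a b c ρ) 1 (fun r => r 4)) ((π 3) + a • (π 4)) p := by
    rw [lieD1y]
    exact (π 3).hasFDerivAt.add ((π 4).hasFDerivAt.const_mul a)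
  have h4 : HasFDerivAt (lieD (dyadZ a b c ρ) 2 (fun r => r 4))
      ((-(π 4) - (π 5)) + a • ((π 3) + a • (π 4))) p := by
    rw [lieD2y]
    exact ((π 4).hasFDerivAt.neg.sub (π 5).hasFDerivAt).add
      (((π 3).hasFDerivAt.add ((π 4).hasFDerivAt.const_mul a)).const_mul a)
  have h5 : HasFDerivAt (lieD (dyadZ a b c ρ) 3 (fun r => r 4))
      ((-((π 3) + a • (π 4)) - ((p 5 • (π 3) + (p 3 - c) • (π 5)) + ρ • ((π 2) - (π 5))))
        + a • ((-(π 4) - (π 5)) + a • ((π 3) + a • (π 4)))) p := by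
    rw [lieD3y]
    exact (((π 3).hasFDerivAt.add ((π 4).hasFDerivAt.const_mul a)).neg.sub
        ((((π 5).hasFDerivAt.mul ((π 3).hasFDerivAt.sub_const c)).const_add b).add
          (((π 2).hasFDerivAt.sub (π 5).hasFDerivAt).const_mul ρ))).add
      ((((π 4).hasFDerivAt.neg.sub (π 5).hasFDerivAt).add
        (((π 3).hasFDerivAt.add ((π 4).hasFDerivAt.const_mul a)).const_mul a)).const_mul a)
  have hD : HasFDerivAt (PhiX2Y4c (dyadZ a b c ρ)) (ContinuousLinearMap.pi (Dmat a c ρ p)) p := by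
    rw [hasFDerivAt_pi']
    intro i
    fin_cases i <;> simp only [ContinuousLinearMap.proj_pi]
    · exact h0
    · exact h1
    · exact h2
    · exact h3
    · exact h4
    · exact h5
  rw [obsDet, hD.fderiv, ← LinearMap.det_toMatrix' ((ContinuousLinearMap.pi (Dmat a c ρ p)).toLinearMap)]
  have hM : LinearMap.toMatrix' ((ContinuousLinearMap.pi (Dmat a c ρ p)).toLinearMap)
      = !![1,0,0,0,0,0;
           0,-1,-1,0,0,0;
           0,0,0,0,1,0;
           0,0,0,1,a,0;
           0,0,0,a,a*a-1,-1;
           0,0,-ρ, a*a-1-p 5, a*a*a-2*a, c - p 3 + ρ - a] := by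
    ext i j
    fin_cases i <;> fin_cases j <;>
      simp [Dmat, LinearMap.toMatrix'_apply, Pi.single_apply, cons_val_five, Matrix.vecHead, Matrix.vecTail] <;> ring
  rw [hM]
  simp [Matrix.det_succ_row_zero, Fin.sum_univ_succ, cons_val_five, Matrix.vecHead, Matrix.vecTail]
  norm_num [Fin.succAbove, Fin.lt_def]
  simp [Matrix.cons_val]
end
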